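/- For every odd integer n ≥ 3, the cycle graph on n vertices is net-zero; equivalently, c_0(C_n) = c_1(C_n) = 2^{n−1}. -/

import Mathlib

/-!
Complementing a coloring exchanges black-black and white-white edges. Modulo 2, an edge is
monochromatic exactly when it has an even number of black ends, so
`#BB + #WW ≡ #E + ∑_{v black} deg v`. If every degree is even and `#E` is odd, as for an odd
cycle, complementation therefore flips the parity of `#BB` and is a bijection between the
colorings counted by `colEven` and those counted by `colOdd`; each is then half of `2 ^ n`.
-/

attribute [local instance] Classical.propDecidable

/-- The number of 2-colorings (`1` = black) of the vertices of `G` for which the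
number of black-black edges is even. -/
noncomputable def colEven {V : Type*} [Fintype V] (G : SimpleGraph V) : ℕ :=
  (Finset.univ.filter fun x : V → Fin 2 =>
    Even (G.edgeFinset.filter fun e => ∀ v ∈ e, x v = 1).card).card

/-- The number of 2-colorings of the vertices of `G` for which the
number of black-black edges is odd. -/
noncomputable def colOdd {V : Type*} [Fintype V] (G : SimpleGraph V) : ℕ :=
  (Finset.univ.filter fun x : V → Fin 2 =>
    Odd (G.edgeFinset.filter fun e => ∀ v ∈ e, x v = 1).card).card

open Finset SimpleGraph

namespace SimpleGraph

variable {V : Type*} [Fintype V] (G : SimpleGraph V)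

theorem sum_edgeFinset_sum_mem_eq_sum_degree_smul {M : Type*} [AddCommMonoid M] (f : V → M) :
    ∑ e ∈ G.edgeFinset, ∑ v with v ∈ e, f v = ∑ v, G.degree v • f v := by
  simp_rw [← card_incidenceFinset_eq_degree, ← sum_const]
  refine sum_comm' fun e v => ?_
  simp [mem_incidenceFinset, incidenceSet]

noncomputable def blackEdges (x : V → Fin 2) : Finset (Sym2 V) :=
  G.edgeFinset.filter fun e => ∀ v ∈ e, x v = 1

theorem blackEdges_rev_comp (x : V → Fin 2) :
    G.blackEdges (Fin.rev ∘ x) = G.edgeFinset.filter fun e => ∀ v ∈ e, x v = 0 := by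
  have : ∀ a : Fin 2, Fin.rev a = 1 ↔ a = 0 := by decide
  simp [blackEdges, this]

theorem indicator_black_add_indicator_white {e : Sym2 V} (he : ¬ e.IsDiag) (x : V → Fin 2) :
    ((if ∀ v ∈ e, x v = 1 then 1 else 0) + (if ∀ v ∈ e, x v = 0 then 1 else 0) : ZMod 2)
      = 1 + ∑ v with v ∈ e, if x v = 1 then 1 else 0 := by
  induction e using Sym2.ind with
  | _ u w =>
    have huw : u ≠ w := he
    have : univ.filter (· ∈ s(u, w)) = {u, w} := by ext; simp
    rw [this, sum_pair huw]
    simp only [Sym2.mem_iff, forall_eq_or_imp, forall_eq]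
    generalize x u = a, x w = b
    revert a b; decide

theorem card_blackEdges_add_card_blackEdges_rev_comp (x : V → Fin 2) :
    (#(G.blackEdges x) + #(G.blackEdges (Fin.rev ∘ x)) : ZMod 2)
      = #G.edgeFinset + ∑ v, G.degree v • (if x v = 1 then 1 else 0) := by
  rw [← sum_edgeFinset_sum_mem_eq_sum_degree_smul, blackEdges_rev_comp, blackEdges,
    card_filter, card_filter, card_eq_sum_ones G.edgeFinset]
  push_cast
  rw [← sum_add_distrib, ← sum_add_distrib]
  refine sum_congr rfl fun e he => ?_
  exact indicator_black_add_indicator_white (G.not_isDiag_of_mem_edgeSet (mem_edgeFinset.mp he)) x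

theorem even_card_blackEdges_iff_odd_rev_comp (hdeg : ∀ v, Even (G.degree v))
    (hE : Odd #G.edgeFinset) (x : V → Fin 2) :
    Even #(G.blackEdges x) ↔ Odd #(G.blackEdges (Fin.rev ∘ x)) := by
  have hsum := G.card_blackEdges_add_card_blackEdges_rev_comp x
  simp only [nsmul_eq_mul, ZMod.natCast_eq_zero_iff_even.mpr (hdeg _), zero_mul, sum_const_zero,
    add_zero, ZMod.natCast_eq_one_iff_odd.mpr hE] at hsum
  rw [← Nat.cast_add, ZMod.natCast_eq_one_iff_odd, Nat.odd_add'] at hsum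
  exact hsum.symm

theorem colEven_eq_colOdd (hdeg : ∀ v, Even (G.degree v)) (hE : Odd #G.edgeFinset) :
    colEven G = colOdd G := by
  have hrev (x : V → Fin 2) : Fin.rev ∘ Fin.rev ∘ x = x := by funext; simp
  refine card_nbij' (Fin.rev ∘ ·) (Fin.rev ∘ ·) (fun x hx => ?_) (fun x hx => ?_)
    (fun x _ => hrev x) (fun x _ => hrev x)
  · simp only [coe_filter, mem_univ, true_and, Set.mem_ofPred_eq] at hx ⊢
    exact (G.even_card_blackEdges_iff_odd_rev_comp hdeg hE x).mp hx
  · simp only [coe_filter, mem_univ, true_and, Set.mem_ofPred_eq] at hx ⊢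
    rw [← hrev x] at hx
    exact (G.even_card_blackEdges_iff_odd_rev_comp hdeg hE _).mpr hx

theorem colEven_add_colOdd : colEven G + colOdd G = 2 ^ Fintype.card V := by
  simp only [colEven, colOdd, ← Nat.not_even_iff_odd, card_filter_add_card_filter_not, card_univ,
    Fintype.card_fun, Fintype.card_fin]

theorem cycleGraph_degree_eq_two (n : ℕ) [DecidableRel (cycleGraph (n + 3)).Adj]
    (v : Fin (n + 3)) : (cycleGraph (n + 3)).degree v = 2 := by
  convert cycleGraph_degree_three_le

theorem card_edgeFinset_cycleGraph (n : ℕ) [DecidableRel (cycleGraph (n + 3)).Adj] :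
    #(cycleGraph (n + 3)).edgeFinset = n + 3 := by
  have h := (cycleGraph (n + 3)).sum_degrees_eq_twice_card_edges
  simp only [cycleGraph_degree_eq_two, sum_const, card_univ, Fintype.card_fin, smul_eq_mul] at h
  omega

end SimpleGraph

theorem stmt_13 (n : ℕ) (hn : 3 ≤ n) (hodd : Odd n) :
    colEven (SimpleGraph.cycleGraph n) = 2 ^ (n - 1) ∧
    colOdd (SimpleGraph.cycleGraph n) = 2 ^ (n - 1) := by
  obtain ⟨m, rfl⟩ := Nat.exists_eq_add_of_le' hn
  have heq : colEven (cycleGraph (m + 3)) = colOdd (cycleGraph (m + 3)) := by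
    refine colEven_eq_colOdd _ (fun v => ?_) ?_
    · rw [cycleGraph_degree_eq_two]; exact even_two
    · rwa [card_edgeFinset_cycleGraph]
  have hsum := colEven_add_colOdd (cycleGraph (m + 3))
  rw [Fintype.card_fin, pow_succ, ← heq] at hsum
  rw [← heq, and_self]
  show _ = 2 ^ (m + 2)
  omega
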